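/- Among connected unweighted simple graphs on n vertices, the path graph maximizes the average shortest path length; i.e., for any connected graph G on n vertices, a_G ≤ (n+1)/3. -/

import Mathlib

/-!
Some vertex `v` of a finite connected graph can be deleted without disconnecting it (a leaf of a
spanning tree), and deleting it can only increase the distances among the remaining vertices.
The distances from `v` form an initial segment `0, 1, …, e` of `ℕ`, so their sum is at most
`0 + 1 + ⋯ + (n - 1)`. By induction on `n`, the distances over all ordered pairs sum to at most
`(n - 1) n (n + 1) / 3`, the value attained by the path.
-/

open Finset

theorem Finset.sum_le_sum_range_card_of_isLowerSet_image {ι : Type*} [DecidableEq ι]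
    (f : ι → ℕ) (s : Finset ι) (hs : IsLowerSet (f '' s)) :
    ∑ i ∈ s, f i ≤ ∑ j ∈ range #s, j := by
  induction s using Finset.induction_on_max_value f with
  | empty => simp
  | insert a s ha hmax ih =>
    have hs' : IsLowerSet (f '' s) := by
      rintro _ j hj ⟨i, hi, rfl⟩
      obtain ⟨k, hk, rfl⟩ := hs hj ⟨i, mem_insert_of_mem hi, rfl⟩
      rcases mem_insert.mp hk with rfl | hk
      · exact ⟨i, hi, le_antisymm (hmax i hi) hj⟩
      · exact ⟨k, hk, rfl⟩
    have hfa : f a < #s + 1 := calc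
      f a < #(range (f a + 1)) := by simp
      _ ≤ #((insert a s).image f) := card_le_card fun j hj ↦ by
          rw [← mem_coe, coe_image]
          exact hs (mem_range_succ_iff.mp hj) ⟨a, mem_insert_self a s, rfl⟩
      _ ≤ #(insert a s) := card_image_le
      _ = #s + 1 := card_insert_of_notMem ha
    have := ih hs'
    rw [sum_insert ha, card_insert_of_notMem ha, sum_range_succ]
    omega

namespace SimpleGraph

variable {V W : Type*} {G : SimpleGraph V} {u v : V}

theorem Reachable.dist_map_le {G' : SimpleGraph W} (f : G →g G') (h : G.Reachable u v) :
    G'.dist (f u) (f v) ≤ G.dist u v := by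
  obtain ⟨p, hp⟩ := h.exists_walk_length_eq_dist
  rw [← hp, ← p.length_map f]
  exact dist_le _

theorem Preconnected.isLowerSet_range_dist (hG : G.Preconnected) (u : V) :
    IsLowerSet (Set.range (G.dist u)) := by
  rintro _ j hj ⟨v, rfl⟩
  obtain ⟨p, hp⟩ := (hG u v).exists_walk_length_eq_dist
  refine ⟨p.getVert j, ?_⟩
  rw [← length_eq_dist_of_subwalk hp (p.isSubwalk_take j), Walk.take_length]
  omega

theorem Preconnected.sum_dist_le [Fintype V] (hG : G.Preconnected) (u : V) :
    ∑ v, G.dist u v ≤ ∑ j ∈ range (Fintype.card V), j := by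
  classical
  simpa using sum_le_sum_range_card_of_isLowerSet_image (G.dist u) univ
    (by simpa using hG.isLowerSet_range_dist u)

theorem sum_sum_dist_eq_sum_sum_compl_singleton_add [Fintype V] [DecidableEq V] (v : V) :
    ∑ u, ∑ w, G.dist u w =
      ∑ x : ({v}ᶜ : Set V), ∑ y : ({v}ᶜ : Set V), G.dist x y + 2 * ∑ w, G.dist v w := by
  simp_rw [Fintype.sum_eq_add_sum_subtype_ne _ v, dist_self, sum_add_distrib, dist_comm (v := v)]
  ring_nf
  -- the two sides differ only in `↥({v}ᶜ : Set V)` versus `{i // i ≠ v}`, which are defeq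
  rfl

theorem Preconnected.three_mul_sum_sum_dist_le [Fintype V] (hG : G.Preconnected) :
    3 * ∑ u, ∑ v, G.dist u v ≤ (Fintype.card V - 1) * Fintype.card V * (Fintype.card V + 1) := by
  classical
  induction h : Fintype.card V generalizing V with
  | zero => simp [Fintype.card_eq_zero_iff.mp h]
  | succ n ih =>
    have : Nonempty V := Fintype.card_pos_iff.mp (by omega)
    obtain ⟨v, hv⟩ := (Connected.mk hG).exists_preconnected_induce_compl_singleton_of_finite
    have hcard : Fintype.card ({v}ᶜ : Set V) = n := by simp [filter_ne', h]
    have h_induce : ∑ x : ({v}ᶜ : Set V), ∑ y : ({v}ᶜ : Set V), G.dist x y ≤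
        ∑ x, ∑ y, (G.induce {v}ᶜ).dist x y := by
      gcongr with x _ y _
      exact (hv x y).dist_map_le (Embedding.induce _).toHom
    have h_rest := ih hv hcard
    have h_from_v := h ▸ hG.sum_dist_le v
    have h_gauss := sum_range_id_mul_two (n + 1)
    have h_step : (n - 1) * n * (n + 1) + 3 * ((n + 1) * n) = n * (n + 1) * (n + 2) := by
      rcases n with _ | m
      · rfl
      · simp only [Nat.add_sub_cancel]; ring
    simp only [Nat.add_sub_cancel] at h_gauss ⊢
    rw [sum_sum_dist_eq_sum_sum_compl_singleton_add v]
    linarith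

end SimpleGraph

/-- Among connected unweighted simple graphs on n vertices, the path graph maximizes the
average shortest path length: a_G ≤ (n + 1) / 3. -/
theorem avg_shortest_path_length_le (n : ℕ) (hn : 2 ≤ n) (G : SimpleGraph (Fin n))
    (hG : G.Connected) :
    (1 / (n * (n - 1)) : ℝ) *
        ∑ i : Fin n, ∑ j : Fin n, (if i ≠ j then (G.dist i j : ℝ) else 0) ≤
      (n + 1) / 3 := by
  have h_offdiag : ∑ i : Fin n, ∑ j : Fin n, (if i ≠ j then (G.dist i j : ℝ) else 0) =
      ∑ i, ∑ j, (G.dist i j : ℝ) := by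
    refine sum_congr rfl fun i _ ↦ sum_congr rfl fun j _ ↦ ?_
    by_cases h : i = j <;> simp [h]
  have h_wiener : 3 * ∑ i, ∑ j, (G.dist i j : ℝ) ≤ (n - 1) * n * (n + 1) := by
    have h := hG.preconnected.three_mul_sum_sum_dist_le
    rw [Fintype.card_fin] at h
    have := (Nat.cast_le (α := ℝ)).mpr h
    push_cast [Nat.cast_sub (by omega : 1 ≤ n)] at this
    exact this
  have h_pos : (0 : ℝ) < n * (n - 1) := by
    have : (2 : ℝ) ≤ n := by exact_mod_cast hn
    nlinarith
  rw [h_offdiag, one_div, inv_mul_le_iff₀ h_pos]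
  linarith
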